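/- arXiv:1310.2578 — 2 statements merged into one kernel-verified Lean document; each statement's English description precedes it below -/
import Mathlib

section
/- Let λx, λy, v₁, v₂ ∈ ℝ with v₁, v₂ > 0, and let θ₁, θ₂ ∈ ℝ with sin θ₁ ≠ 0, sin θ₂ ≠ 0, cos θ₁ ≠ 0, cos θ₂ ≠ 0. Suppose λy₁ · tan θ₁ = λx, λy₂ · tan θ₂ = λx, λx ≠ 0, and λx·v₁·sin θ₁ + λy₁·v₁·cos θ₁ = λx·v₂·sin θ₂ + λy₂·v₂·cos θ₂. Then v₁ / v₂ = sin θ₁ / sin θ₂. -/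
/-!
On a singular arc the adjoints satisfy `λy sin θ = λx cos θ`, so the Hamiltonian value
`H = λx v sin θ + λy v cos θ` satisfies `H sin θ = λx v (sin² θ + cos² θ) = λx v`.
Equality of `H` across the boundary then gives `λx v₁ sin θ₂ = H sin θ₁ sin θ₂ = λx v₂ sin θ₁`,
and `λx ≠ 0` can be cancelled.
-/

open Real

noncomputable def pathHamiltonian (lx ly v θ : ℝ) : ℝ :=
  lx * v * sin θ + ly * v * cos θ

lemma mul_sin_eq_of_mul_tan_eq {lx ly θ : ℝ} (hc : cos θ ≠ 0) (h : ly * tan θ = lx) :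
    ly * sin θ = lx * cos θ := by
  rw [← h, tan_eq_sin_div_cos]
  field_simp

lemma pathHamiltonian_mul_sin {lx ly v θ : ℝ} (h : ly * sin θ = lx * cos θ) :
    pathHamiltonian lx ly v θ * sin θ = lx * v := by
  unfold pathHamiltonian
  linear_combination v * cos θ * h + lx * v * sin_sq_add_cos_sq θ

lemma mul_sin_eq_mul_sin_of_pathHamiltonian_eq {lx ly₁ ly₂ v₁ v₂ θ₁ θ₂ : ℝ}
    (h₁ : ly₁ * sin θ₁ = lx * cos θ₁) (h₂ : ly₂ * sin θ₂ = lx * cos θ₂) (hlx : lx ≠ 0)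
    (hH : pathHamiltonian lx ly₁ v₁ θ₁ = pathHamiltonian lx ly₂ v₂ θ₂) :
    v₁ * sin θ₂ = v₂ * sin θ₁ := by
  have key : lx * (v₁ * sin θ₂) = lx * (v₂ * sin θ₁) := by
    linear_combination sin θ₁ * pathHamiltonian_mul_sin (v := v₂) h₂
      - sin θ₂ * pathHamiltonian_mul_sin (v := v₁) h₁ + sin θ₁ * sin θ₂ * hH
  exact mul_left_cancel₀ hlx key

theorem generalized_snell_velocity_general (lx ly₁ ly₂ v₁ v₂ θ₁ θ₂ : ℝ)
    (hv₂ : 0 < v₂)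
    (hs₂ : Real.sin θ₂ ≠ 0)
    (hc₁ : Real.cos θ₁ ≠ 0) (hc₂ : Real.cos θ₂ ≠ 0)
    (h₁ : ly₁ * Real.tan θ₁ = lx) (h₂ : ly₂ * Real.tan θ₂ = lx)
    (hlx : lx ≠ 0)
    (hH : lx * v₁ * Real.sin θ₁ + ly₁ * v₁ * Real.cos θ₁
        = lx * v₂ * Real.sin θ₂ + ly₂ * v₂ * Real.cos θ₂) :
    v₁ / v₂ = Real.sin θ₁ / Real.sin θ₂ := by
  have hsnell := mul_sin_eq_mul_sin_of_pathHamiltonian_eq (mul_sin_eq_of_mul_tan_eq hc₁ h₁)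
    (mul_sin_eq_of_mul_tan_eq hc₂ h₂) hlx hH
  rw [div_eq_div_iff hv₂.ne' hs₂]
  linear_combination hsnell

theorem generalized_snell_velocity (lx ly₁ ly₂ v₁ v₂ θ₁ θ₂ : ℝ)
    (hv₁ : 0 < v₁) (hv₂ : 0 < v₂)
    (hs₁ : Real.sin θ₁ ≠ 0) (hs₂ : Real.sin θ₂ ≠ 0)
    (hc₁ : Real.cos θ₁ ≠ 0) (hc₂ : Real.cos θ₂ ≠ 0)
    (h₁ : ly₁ * Real.tan θ₁ = lx) (h₂ : ly₂ * Real.tan θ₂ = lx)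
    (hlx : lx ≠ 0)
    (hH : lx * v₁ * Real.sin θ₁ + ly₁ * v₁ * Real.cos θ₁
        = lx * v₂ * Real.sin θ₂ + ly₂ * v₂ * Real.cos θ₂) :
    v₁ / v₂ = Real.sin θ₁ / Real.sin θ₂ :=
  generalized_snell_velocity_general lx ly₁ ly₂ v₁ v₂ θ₁ θ₂ hv₂ hs₂ hc₁ hc₂ h₁ h₂ hlx hH
end

section
/- Let λx ≠ 0, v₁, v₂, r₁, r₂ > 0, λθ ≥ 0, and angles θ*, θ₁, θ₂ with sin θ₁ ≠ 0, sin θ₂ ≠ 0. Define Δθ₁ = θ* − θ₁ and Δθ₂ = θ₂ − θ*, and assume cos Δθ₁ ≠ 1 and cos Δθ₂ ≠ 1. If λθ·(v₁/r₁) = −(λx·v₁/sin θ₁)·(1 − cos Δθ₁) and λθ·(v₂/r₂) = −(λx·v₂/sin θ₂)·(1 − cos Δθ₂), then r₁ / r₂ = (sin θ₁·(1 − cos Δθ₂)) / (sin θ₂·(1 − cos Δθ₁)). -/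
/-! Cancelling the speed, each curvature equation says `lθ * sin θᵢ = -lx (1 - cos Δθᵢ) rᵢ`.
The two left-hand sides share the factor `lθ`, so `lx` times either side of the cross-multiplied
ratio equals `-lθ sin θ₁ sin θ₂`, and `lx ≠ 0` can be cancelled. -/

section

variable {K : Type*} [Field K]

theorem mul_eq_neg_mul_mul_of_mul_div_eq {l m v r s k : K} (hv : v ≠ 0) (hr : r ≠ 0)
    (hs : s ≠ 0) (h : l * (v / r) = -(m * v / s) * k) : l * s = -(m * k * r) := by
  field_simp at h
  linear_combination h

theorem div_eq_div_of_mul_eq_neg_mul_mul {l m s₁ s₂ k₁ k₂ r₁ r₂ : K} (hm : m ≠ 0)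
    (hr₂ : r₂ ≠ 0) (hs₂ : s₂ ≠ 0) (hk₁ : k₁ ≠ 0)
    (h₁ : l * s₁ = -(m * k₁ * r₁)) (h₂ : l * s₂ = -(m * k₂ * r₂)) :
    r₁ / r₂ = s₁ * k₂ / (s₂ * k₁) := by
  rw [div_eq_div_iff hr₂ (mul_ne_zero hs₂ hk₁)]
  apply mul_left_cancel₀ hm
  linear_combination s₂ * h₁ - s₁ * h₂

end

theorem refraction_law_radii_general (lx lθ v₁ v₂ r₁ r₂ θstar θ₁ θ₂ : ℝ)
    (hlx : lx ≠ 0) (hv₁ : 0 < v₁) (hv₂ : 0 < v₂) (hr₁ : 0 < r₁) (hr₂ : 0 < r₂)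
    (hs₁ : Real.sin θ₁ ≠ 0) (hs₂ : Real.sin θ₂ ≠ 0)
    (hΔ₁ : Real.cos (θstar - θ₁) ≠ 1)
    (h₁ : lθ * (v₁ / r₁) = -(lx * v₁ / Real.sin θ₁) * (1 - Real.cos (θstar - θ₁)))
    (h₂ : lθ * (v₂ / r₂) = -(lx * v₂ / Real.sin θ₂) * (1 - Real.cos (θ₂ - θstar))) :
    r₁ / r₂ = (Real.sin θ₁ * (1 - Real.cos (θ₂ - θstar)))
            / (Real.sin θ₂ * (1 - Real.cos (θstar - θ₁))) :=
  div_eq_div_of_mul_eq_neg_mul_mul hlx hr₂.ne' hs₂ (sub_ne_zero.mpr hΔ₁.symm)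
    (mul_eq_neg_mul_mul_of_mul_div_eq hv₁.ne' hr₁.ne' hs₁ h₁)
    (mul_eq_neg_mul_mul_of_mul_div_eq hv₂.ne' hr₂.ne' hs₂ h₂)

theorem refraction_law_radii (lx lθ v₁ v₂ r₁ r₂ θstar θ₁ θ₂ : ℝ)
    (hlx : lx ≠ 0) (hv₁ : 0 < v₁) (hv₂ : 0 < v₂) (hr₁ : 0 < r₁) (hr₂ : 0 < r₂)
    (hlθ : 0 ≤ lθ)
    (hs₁ : Real.sin θ₁ ≠ 0) (hs₂ : Real.sin θ₂ ≠ 0)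
    (hΔ₁ : Real.cos (θstar - θ₁) ≠ 1) (hΔ₂ : Real.cos (θ₂ - θstar) ≠ 1)
    (h₁ : lθ * (v₁ / r₁) = -(lx * v₁ / Real.sin θ₁) * (1 - Real.cos (θstar - θ₁)))
    (h₂ : lθ * (v₂ / r₂) = -(lx * v₂ / Real.sin θ₂) * (1 - Real.cos (θ₂ - θstar))) :
    r₁ / r₂ = (Real.sin θ₁ * (1 - Real.cos (θ₂ - θstar)))
            / (Real.sin θ₂ * (1 - Real.cos (θstar - θ₁))) :=
  refraction_law_radii_general lx lθ v₁ v₂ r₁ r₂ θstar θ₁ θ₂ hlx hv₁ hv₂ hr₁ hr₂ hs₁ hs₂ hΔ₁ h₁ h₂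
end
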